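/- For every w = (k_1, k_2, …) ∈ Σ_{≥0} and every m, n ∈ ℕ ∪ {0}, the 0-odometer O_0 and the shift σ on Σ_{≥0} satisfy the pointwise renormalization identity (O_0^m ∘ σ^n)(w) = (σ^n ∘ O_0^{m · 2^n · 2^{k_1 + k_2 + ⋯ + k_n}})(w). -/

import Mathlib

/-!
Encode `w = (k₁, k₂, …)` as the binary digit sequence `1^{k₁} 0 1^{k₂} 0 …`. Then `O₀` is adding `1`
in the dyadic odometer and `σ` drops the first `k₁ + 1` digits, so the identity is the 2-adic
fact that adding `m · 2^{k₁+1}` and then dropping `k₁ + 1` digits is the same as dropping them and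
adding `m`, applied `n` times. Instead of building the encoding, we check directly that
`O₀^{2^{k+1}} (k :: v) = k :: O₀ v`.
-/

/-- The `0`-odometer on the Baire-type space `ℕ₀^ℕ`:
`O₀(w₁,w₂,w₃,…) = (0,…,0 (w₁ times), w₂+1, w₃, …)`. -/
def baireOdometer (w : ℕ → ℕ) : ℕ → ℕ := fun i =>
  if i < w 0 then 0
  else if i = w 0 then w 1 + 1
  else w (i - w 0 + 1)

/-- The shift map `σ` on `ℕ₀^ℕ`. -/
def baireShift (w : ℕ → ℕ) : ℕ → ℕ := fun i => w (i + 1)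

def seqCons (a : ℕ) (v : ℕ → ℕ) : ℕ → ℕ
  | 0 => a
  | i + 1 => v i

theorem baireShift_seqCons (a : ℕ) (v : ℕ → ℕ) : baireShift (seqCons a v) = v := rfl

theorem seqCons_baireShift (w : ℕ → ℕ) : seqCons (w 0) (baireShift w) = w := by
  funext i
  cases i <;> rfl

theorem baireOdometer_zero_seqCons (a : ℕ) (r : ℕ → ℕ) :
    baireOdometer (seqCons 0 (seqCons a r)) = seqCons (a + 1) r := by
  funext i
  cases i <;> simp [baireOdometer, seqCons]

theorem baireOdometer_succ_seqCons (k : ℕ) (v : ℕ → ℕ) :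
    baireOdometer (seqCons (k + 1) v) = seqCons 0 (baireOdometer (seqCons k v)) := by
  funext i
  cases i <;> simp only [baireOdometer, seqCons] <;> grind

-- In binary, adding `2 ^ j` to `1^j 0 1^a 0 …` merges the first two blocks of ones, and adding it
-- to `1^{j+k+1} 0 …` gives `1^j 0` followed by `1^k 0 …` plus one.
theorem iterate_baireOdometer_two_pow_seqCons (j : ℕ) :
    (∀ a r, baireOdometer^[2 ^ j] (seqCons j (seqCons a r)) = seqCons (j + a + 1) r) ∧
      ∀ k v, baireOdometer^[2 ^ j] (seqCons (j + k + 1) v) =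
        seqCons j (baireOdometer (seqCons k v)) := by
  induction j with
  | zero =>
    refine ⟨fun a r => ?_, fun k v => ?_⟩
    · simpa [add_comm] using baireOdometer_zero_seqCons a r
    · simpa [add_comm] using baireOdometer_succ_seqCons k v
  | succ j ih =>
    obtain ⟨hmerge, hsplit⟩ := ih
    refine ⟨fun a r => ?_, fun k v => ?_⟩
    · rw [pow_succ, mul_two, Function.iterate_add_apply, hsplit 0, baireOdometer_zero_seqCons,
        hmerge]
      congr 1
      ring
    · rw [pow_succ, mul_two, Function.iterate_add_apply,
        show j + 1 + k + 1 = j + (k + 1) + 1 by ring, hsplit, baireOdometer_succ_seqCons, hmerge,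
        add_zero]

theorem iterate_baireOdometer_two_pow_succ_seqCons (k : ℕ) (v : ℕ → ℕ) :
    baireOdometer^[2 ^ (k + 1)] (seqCons k v) = seqCons k (baireOdometer v) := by
  rw [pow_succ, mul_two, Function.iterate_add_apply, ← seqCons_baireShift v,
    (iterate_baireOdometer_two_pow_seqCons k).1, (iterate_baireOdometer_two_pow_seqCons k).2]

theorem iterate_baireOdometer_mul_seqCons (m k : ℕ) (v : ℕ → ℕ) :
    baireOdometer^[m * 2 ^ (k + 1)] (seqCons k v) = seqCons k (baireOdometer^[m] v) := by
  rw [mul_comm, Function.iterate_mul]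
  exact (Function.Semiconj.iterate_right
    (fun v => (iterate_baireOdometer_two_pow_succ_seqCons k v).symm) m v).symm

theorem iterate_baireOdometer_baireShift (m : ℕ) (w : ℕ → ℕ) :
    baireOdometer^[m] (baireShift w) = baireShift (baireOdometer^[m * 2 ^ (w 0 + 1)] w) := by
  have h := iterate_baireOdometer_mul_seqCons m (w 0) (baireShift w)
  rw [seqCons_baireShift] at h
  rw [h, baireShift_seqCons]

theorem baireOdometer_shift_renormalization (w : ℕ → ℕ) (m n : ℕ) :
    (baireOdometer)^[m] ((baireShift)^[n] w) =
      (baireShift)^[n]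
        ((baireOdometer)^[m * 2 ^ n * 2 ^ (∑ i ∈ Finset.range n, w i)] w) := by
  induction n generalizing w with
  | zero => simp
  | succ n ih =>
    rw [Function.iterate_succ_apply, ih, iterate_baireOdometer_baireShift,
      ← Function.iterate_succ_apply, Finset.sum_range_succ']
    congr 2
    simp only [baireShift]
    ring
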